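/- Let σ₁, σ₂ > 0 and ρ ∈ ℝ with D := σ₁²σ₂² − ρ² > 0, and define p(y₁,y₂) := (y₂/(σ₂√(2πD))) · exp(−(σ₂²y₁² + σ₁²y₂² − 2ρy₁y₂)/(2D)) for (y₁,y₂) ∈ ℝ×(0,∞). Then for every y₁ ∈ ℝ, ∫_{−∞}^{∞} ∫_{0}^{∞} p(y₁ + ỹ₁, ỹ₂) · p(ỹ₁, ỹ₂) dỹ₂ dỹ₁ = (1/(8√D)) · exp(−σ₂²y₁²/(4D)). -/

import Mathlib

/-!
With `D = σ₁²σ₂² − ρ²`, the product `p(y₁ + t₁, t₂) p(t₁, t₂)` is `t₂²` times the exponential of a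
quadratic polynomial in `t₁` with leading coefficient `−σ₂²/D`. Integrating out `t₁` first
(Tonelli/Fubini, the integrand being nonnegative) completes a square and leaves a multiple of
`t₂² exp(−t₂²/σ₂²)`, whose integral over `(0, ∞)` is the Gamma value `Γ(3/2) σ₂³ / 2`.
-/

open MeasureTheory Real Set

namespace DensityConvolution

noncomputable def pdens (σ₁ σ₂ ρ : ℝ) (y₁ y₂ : ℝ) : ℝ :=
  y₂ / (σ₂ * Real.sqrt (2 * π * (σ₁ ^ 2 * σ₂ ^ 2 - ρ ^ 2))) *
    Real.exp (-(σ₂ ^ 2 * y₁ ^ 2 + σ₁ ^ 2 * y₂ ^ 2 - 2 * ρ * y₁ * y₂) /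
      (2 * (σ₁ ^ 2 * σ₂ ^ 2 - ρ ^ 2)))

theorem neg_mul_sq_add_mul_add_eq {a : ℝ} (ha : a ≠ 0) (b c x : ℝ) :
    -a * x ^ 2 + b * x + c = -a * (x - b / (2 * a)) ^ 2 + (c + b ^ 2 / (4 * a)) := by
  field_simp
  ring

theorem integrable_exp_neg_mul_sq_add_mul_add {a : ℝ} (ha : 0 < a) (b c : ℝ) :
    Integrable fun x : ℝ => exp (-a * x ^ 2 + b * x + c) := by
  simp_rw [neg_mul_sq_add_mul_add_eq ha.ne', exp_add]
  exact ((integrable_exp_neg_mul_sq ha).comp_sub_right _).mul_const _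

theorem integral_exp_neg_mul_sq_add_mul_add {a : ℝ} (ha : 0 < a) (b c : ℝ) :
    ∫ x : ℝ, exp (-a * x ^ 2 + b * x + c) = √(π / a) * exp (c + b ^ 2 / (4 * a)) := by
  simp_rw [neg_mul_sq_add_mul_add_eq ha.ne', exp_add, integral_mul_const,
    integral_sub_right_eq_self (fun x => exp (-a * x ^ 2)), integral_gaussian]

theorem integrable_sq_mul_exp_neg_mul_sq {b : ℝ} (hb : 0 < b) :
    Integrable fun x : ℝ => x ^ 2 * exp (-b * x ^ 2) := by
  simpa only [rpow_two] using integrable_rpow_mul_exp_neg_mul_sq hb (s := 2) (by norm_num)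

theorem integral_Ioi_sq_mul_exp_neg_mul_sq {b : ℝ} (hb : 0 < b) :
    ∫ x in Ioi 0, x ^ 2 * exp (-b * x ^ 2) = √(π / b) / (4 * b) := by
  have hGamma : Gamma (3 / 2) = √π / 2 := by
    rw [show (3 / 2 : ℝ) = 1 / 2 + 1 by norm_num, Gamma_add_one (by norm_num), Gamma_one_half_eq]
    ring
  have hpow : b ^ (-(2 + 1) / 2 : ℝ) = (b * √b)⁻¹ := by
    rw [show (-(2 + 1) / 2 : ℝ) = -(1 + 1 / 2) by norm_num, rpow_neg hb.le, rpow_add hb, rpow_one,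
      sqrt_eq_rpow]
  have h := integral_rpow_mul_exp_neg_mul_rpow (p := 2) (q := 2) two_pos (by norm_num) hb
  simp only [rpow_two] at h
  rw [h, hpow, show ((2 : ℝ) + 1) / 2 = 3 / 2 by norm_num, hGamma, sqrt_div' _ hb.le]
  field_simp
  ring

section

variable {σ₁ σ₂ ρ : ℝ} (hD : 0 < σ₁ ^ 2 * σ₂ ^ 2 - ρ ^ 2)
include hD

theorem ne_zero_of_sq_mul_sq_sub_sq_pos : σ₂ ≠ 0 := by
  rintro rfl
  nlinarith [sq_nonneg ρ]

theorem pdens_add_mul_pdens (y t₁ t₂ : ℝ) :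
    pdens σ₁ σ₂ ρ (y + t₁) t₂ * pdens σ₁ σ₂ ρ t₁ t₂ =
      t₂ ^ 2 / (2 * π * σ₂ ^ 2 * (σ₁ ^ 2 * σ₂ ^ 2 - ρ ^ 2)) *
        exp (-(σ₂ ^ 2 / (σ₁ ^ 2 * σ₂ ^ 2 - ρ ^ 2)) * t₁ ^ 2
          + (2 * ρ * t₂ - σ₂ ^ 2 * y) / (σ₁ ^ 2 * σ₂ ^ 2 - ρ ^ 2) * t₁
          + (2 * ρ * y * t₂ - σ₂ ^ 2 * y ^ 2 - 2 * σ₁ ^ 2 * t₂ ^ 2)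
            / (2 * (σ₁ ^ 2 * σ₂ ^ 2 - ρ ^ 2))) := by
  have hsqrt := mul_self_sqrt (by positivity : 0 ≤ 2 * π * (σ₁ ^ 2 * σ₂ ^ 2 - ρ ^ 2))
  unfold pdens
  rw [mul_mul_mul_comm, ← exp_add, div_mul_div_comm, mul_mul_mul_comm, hsqrt]
  generalize σ₁ ^ 2 * σ₂ ^ 2 - ρ ^ 2 = D
  congr 1
  · ring
  · congr 1
    ring

theorem integral_pdens_add_mul_pdens (y t₂ : ℝ) :
    ∫ t₁, pdens σ₁ σ₂ ρ (y + t₁) t₂ * pdens σ₁ σ₂ ρ t₁ t₂ =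
      √(π / (σ₂ ^ 2 / (σ₁ ^ 2 * σ₂ ^ 2 - ρ ^ 2))) / (2 * π * σ₂ ^ 2 * (σ₁ ^ 2 * σ₂ ^ 2 - ρ ^ 2)) *
        exp (-(σ₂ ^ 2 * y ^ 2) / (4 * (σ₁ ^ 2 * σ₂ ^ 2 - ρ ^ 2))) *
          (t₂ ^ 2 * exp (-(σ₂ ^ 2)⁻¹ * t₂ ^ 2)) := by
  have hσ₂ := ne_zero_of_sq_mul_sq_sub_sq_pos hD
  simp_rw [pdens_add_mul_pdens hD, integral_const_mul]
  rw [integral_exp_neg_mul_sq_add_mul_add (by positivity)]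
  have hexp : (2 * ρ * y * t₂ - σ₂ ^ 2 * y ^ 2 - 2 * σ₁ ^ 2 * t₂ ^ 2)
      / (2 * (σ₁ ^ 2 * σ₂ ^ 2 - ρ ^ 2)) + ((2 * ρ * t₂ - σ₂ ^ 2 * y)
      / (σ₁ ^ 2 * σ₂ ^ 2 - ρ ^ 2)) ^ 2 / (4 * (σ₂ ^ 2 / (σ₁ ^ 2 * σ₂ ^ 2 - ρ ^ 2)))
      = -(σ₂ ^ 2 * y ^ 2) / (4 * (σ₁ ^ 2 * σ₂ ^ 2 - ρ ^ 2)) + -(σ₂ ^ 2)⁻¹ * t₂ ^ 2 := by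
    set D := σ₁ ^ 2 * σ₂ ^ 2 - ρ ^ 2 with hD_def
    field_simp
    rw [hD_def]
    ring
  rw [hexp, exp_add]
  ring

theorem integrable_pdens_add_mul_pdens (y : ℝ) :
    Integrable (Function.uncurry fun t₁ t₂ => pdens σ₁ σ₂ ρ (y + t₁) t₂ * pdens σ₁ σ₂ ρ t₁ t₂)
      (volume.prod (volume.restrict (Ioi 0))) := by
  have hσ₂ := ne_zero_of_sq_mul_sq_sub_sq_pos hD
  have hcont : Continuous (Function.uncurry fun t₁ t₂ =>
      pdens σ₁ σ₂ ρ (y + t₁) t₂ * pdens σ₁ σ₂ ρ t₁ t₂) := by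
    unfold pdens
    fun_prop
  have hnonneg (t₁ t₂ : ℝ) : 0 ≤ pdens σ₁ σ₂ ρ (y + t₁) t₂ * pdens σ₁ σ₂ ρ t₁ t₂ := by
    rw [pdens_add_mul_pdens hD]
    positivity
  refine (integrable_prod_iff' hcont.aestronglyMeasurable).2 ⟨.of_forall fun t₂ => ?_, ?_⟩
  · simp_rw [Function.uncurry_apply_pair, pdens_add_mul_pdens hD]
    exact (integrable_exp_neg_mul_sq_add_mul_add (by positivity) _ _).const_mul _
  · simp_rw [Function.uncurry_apply_pair, Real.norm_of_nonneg (hnonneg _ _),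
      integral_pdens_add_mul_pdens hD]
    exact ((integrable_sq_mul_exp_neg_mul_sq (by positivity)).const_mul _).restrict

end

theorem convolution_integral_eval_general
    (σ₁ σ₂ ρ : ℝ) (hD : 0 < σ₁ ^ 2 * σ₂ ^ 2 - ρ ^ 2) (y₁ : ℝ) :
    ∫ t₁ : ℝ, ∫ t₂ in Set.Ioi (0 : ℝ),
        pdens σ₁ σ₂ ρ (y₁ + t₁) t₂ * pdens σ₁ σ₂ ρ t₁ t₂ =
      1 / (8 * Real.sqrt (σ₁ ^ 2 * σ₂ ^ 2 - ρ ^ 2)) *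
        Real.exp (-(σ₂ ^ 2 * y₁ ^ 2) / (4 * (σ₁ ^ 2 * σ₂ ^ 2 - ρ ^ 2))) := by
  have hσ₂ := ne_zero_of_sq_mul_sq_sub_sq_pos hD
  rw [integral_integral_swap (integrable_pdens_add_mul_pdens hD y₁)]
  simp_rw [integral_pdens_add_mul_pdens hD, integral_const_mul]
  rw [integral_Ioi_sq_mul_exp_neg_mul_sq (by positivity)]
  generalize σ₁ ^ 2 * σ₂ ^ 2 - ρ ^ 2 = D at hD ⊢
  have hs : 0 < σ₂ ^ 2 := by positivity
  rw [div_div_eq_mul_div, div_inv_eq_mul, sqrt_div' _ hs.le, sqrt_mul pi_pos.le, sqrt_mul pi_pos.le]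
  field_simp
  rw [sq_sqrt pi_pos.le, sq_sqrt hD.le]
  ring

/-- **Lemma (explicit convolution integral).** For `σ₁, σ₂ > 0`, `ρ ∈ ℝ` with
`D = σ₁²σ₂² − ρ² > 0` and every `y₁ ∈ ℝ`,
`∫_{−∞}^∞ ∫_0^∞ p(y₁+ỹ₁, ỹ₂) p(ỹ₁, ỹ₂) dỹ₂ dỹ₁ = (8√D)⁻¹ exp(−σ₂²y₁²/(4D))`. -/
theorem convolution_integral_eval
    (σ₁ σ₂ ρ : ℝ) (hσ₁ : 0 < σ₁) (hσ₂ : 0 < σ₂)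
    (hD : 0 < σ₁ ^ 2 * σ₂ ^ 2 - ρ ^ 2) (y₁ : ℝ) :
    ∫ t₁ : ℝ, ∫ t₂ in Set.Ioi (0 : ℝ),
        pdens σ₁ σ₂ ρ (y₁ + t₁) t₂ * pdens σ₁ σ₂ ρ t₁ t₂ =
      1 / (8 * Real.sqrt (σ₁ ^ 2 * σ₂ ^ 2 - ρ ^ 2)) *
        Real.exp (-(σ₂ ^ 2 * y₁ ^ 2) / (4 * (σ₁ ^ 2 * σ₂ ^ 2 - ρ ^ 2))) :=
  convolution_integral_eval_general σ₁ σ₂ ρ hD y₁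

end DensityConvolution
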